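/- Let (S,·) and (T,·) be semigroups, let φ : S → T be a semigroup homomorphism, and let A ⊆ S. If A is piecewise syndetic in S and the image φ(S) is piecewise syndetic in T, then φ(A) is piecewise syndetic in T. -/

import Mathlib

/-!
Let `G` witness that `A` is piecewise syndetic and `H` that `φ(S)` is. Given a finite `E ⊆ T`,
thickness gives `y` with `h_e · e · y = φ(s_e)` for some `h_e ∈ H`, `s_e ∈ S`; thickness in `S`,
applied to the finitely many `s_e`, gives `x` with `g_e · s_e · x ∈ A` for some `g_e ∈ G`. Then
`φ(g_e) · h_e · e · (y · φ(x)) = φ(g_e · s_e · x) ∈ φ(A)`, so `φ(G) · H` witnesses that `φ(A)` is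
piecewise syndetic.
-/

/-- `A` is thick in a (multiplicative) semigroup. -/
def MulThick {T : Type*} [Semigroup T] (A : Set T) : Prop :=
  ∀ E : Finset T, E.Nonempty → ∃ x : T, ∀ e ∈ E, e * x ∈ A

/-- `A` is piecewise syndetic in a (multiplicative) semigroup. -/
def MulPiecewiseSyndetic {T : Type*} [Semigroup T] (A : Set T) : Prop :=
  ∃ G : Finset T, G.Nonempty ∧ MulThick {s : T | ∃ g ∈ G, g * s ∈ A}

theorem MulThick.exists_forall_mul_mem {T ι : Type*} [Semigroup T] [Finite ι] [Nonempty ι]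
    {B : Set T} (hB : MulThick B) (f : ι → T) : ∃ x : T, ∀ i, f i * x ∈ B := by
  classical
  have := Fintype.ofFinite ι
  obtain ⟨x, hx⟩ := hB (Finset.univ.image f) (Finset.univ_nonempty.image f)
  exact ⟨x, fun i => hx (f i) (Finset.mem_image_of_mem f (Finset.mem_univ i))⟩

open Pointwise in
theorem MulPiecewiseSyndetic.image {S T : Type*} [Semigroup S] [Semigroup T] (φ : S →ₙ* T)
    {A : Set S} (hA : MulPiecewiseSyndetic A) (hrange : MulPiecewiseSyndetic (Set.range φ)) :
    MulPiecewiseSyndetic (φ '' A) := by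
  classical
  obtain ⟨G, hG, hGA⟩ := hA
  obtain ⟨H, hH, hHφ⟩ := hrange
  refine ⟨G.image φ * H, (hG.image φ).mul hH, fun E hE => ?_⟩
  obtain ⟨y, hy⟩ := hHφ E hE
  choose h hhH s hs using fun e : E => hy e e.2
  have : Nonempty E := hE.to_subtype
  obtain ⟨x, hx⟩ := hGA.exists_forall_mul_mem s
  refine ⟨y * φ x, fun e he => ?_⟩
  obtain ⟨g, hgG, hgA⟩ := hx ⟨e, he⟩
  refine ⟨φ g * h ⟨e, he⟩, Finset.mul_mem_mul (Finset.mem_image_of_mem φ hgG) (hhH _), ?_⟩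
  refine ⟨g * (s ⟨e, he⟩ * x), hgA, ?_⟩
  rw [map_mul, map_mul, hs]
  simp only [mul_assoc]

/-- If `φ : S → T` is a semigroup homomorphism, `A ⊆ S` is piecewise syndetic in `S`,
and `φ(S)` is piecewise syndetic in `T`, then `φ(A)` is piecewise syndetic in `T`. -/
theorem stmt7 {S T : Type*} [Semigroup S] [Semigroup T] (φ : S → T)
    (hφ : ∀ a b : S, φ (a * b) = φ a * φ b) (A : Set S)
    (hA : MulPiecewiseSyndetic A) (hrange : MulPiecewiseSyndetic (Set.range φ)) :
    MulPiecewiseSyndetic (φ '' A) :=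
  MulPiecewiseSyndetic.image ⟨φ, hφ⟩ hA hrange
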